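/- Let G be obtained from G_l and G_r by the true twin operation: V(G) = V(G_l) ∪ V(G_r), E(G) = E(G_l) ∪ E(G_r) ∪ {xy : x ∈ TS(G_l), y ∈ TS(G_r)}, TS(G) = TS(G_l) ∪ TS(G_r). Then u^2(G) = min{u^2(G_l) + u^{00}(G_r), u^{00}(G_l) + u^2(G_r)}. -/

import Mathlib

/-- `f` is an Independent Roman Dominating Function of `G`: values in {0,1,2},
every 0-labeled vertex has a 2-labeled neighbor, and no two adjacent vertices
are both positively labeled. -/
def IsIRDF {V : Type*} (G : SimpleGraph V) (f : V → ℕ) : Prop :=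
  (∀ v, f v ≤ 2) ∧
  (∀ v, f v = 0 → ∃ u, G.Adj v u ∧ f u = 2) ∧
  (∀ u v, G.Adj u v → f u = 0 ∨ f v = 0)

/-- The weight of a labeling. -/
def irdfWeight {V : Type*} [Fintype V] (f : V → ℕ) : ℕ := ∑ v, f v

/-- The independent Roman domination number. -/
noncomputable def iR {V : Type*} [Fintype V] (G : SimpleGraph V) : ℕ :=
  sInf {w | ∃ f : V → ℕ, IsIRDF G f ∧ irdfWeight f = w}

/-- `s` is an independent dominating set of `G`. -/
def IsIndepDom {V : Type*} (G : SimpleGraph V) (s : Finset V) : Prop :=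
  (∀ u ∈ s, ∀ v ∈ s, ¬ G.Adj u v) ∧ (∀ v, v ∉ s → ∃ u ∈ s, G.Adj u v)

/-- The independent domination number. -/
noncomputable def indepDomNum {V : Type*} [Fintype V] (G : SimpleGraph V) : ℕ :=
  sInf {n | ∃ s : Finset V, IsIndepDom G s ∧ s.card = n}

/-- The independent Roman domination number, valued in `ℕ∞`. -/
noncomputable def iRE {V : Type*} [Fintype V] (G : SimpleGraph V) : ℕ∞ :=
  sInf {w | ∃ f : V → ℕ, IsIRDF G f ∧ (irdfWeight f : ℕ∞) = w}

/-- `u⁰`: minimum weight of an IRDF labeling every vertex of the twin set `TS` with 0. -/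
noncomputable def uZero {V : Type*} [Fintype V] (G : SimpleGraph V) (TS : Set V) : ℕ∞ :=
  sInf {w | ∃ f : V → ℕ, IsIRDF G f ∧ (∀ v ∈ TS, f v = 0) ∧ (irdfWeight f : ℕ∞) = w}

/-- `u¹`: minimum weight of an IRDF labeling some vertex of `TS` with 1 and no
vertex of `TS` with 2. -/
noncomputable def uOne {V : Type*} [Fintype V] (G : SimpleGraph V) (TS : Set V) : ℕ∞ :=
  sInf {w | ∃ f : V → ℕ, IsIRDF G f ∧ (∃ u ∈ TS, f u = 1) ∧ (∀ v ∈ TS, f v ≠ 2) ∧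
    (irdfWeight f : ℕ∞) = w}

/-- `u²`: minimum weight of an IRDF labeling some vertex of `TS` with 2. -/
noncomputable def uTwo {V : Type*} [Fintype V] (G : SimpleGraph V) (TS : Set V) : ℕ∞ :=
  sInf {w | ∃ f : V → ℕ, IsIRDF G f ∧ (∃ u ∈ TS, f u = 2) ∧ (irdfWeight f : ℕ∞) = w}

/-- `u⁰⁰`: minimum weight of a labeling vanishing on `TS` whose restriction to
`G \ TS` is an IRDF of the induced subgraph `G \ TS`. -/
noncomputable def uZeroZero {V : Type*} [Fintype V] (G : SimpleGraph V) (TS : Set V) : ℕ∞ :=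
  sInf {w | ∃ f : V → ℕ, (∀ v, f v ≤ 2) ∧ (∀ v ∈ TS, f v = 0) ∧
    (∀ v ∉ TS, f v = 0 → ∃ u ∉ TS, G.Adj v u ∧ f u = 2) ∧
    (∀ u v, G.Adj u v → f u = 0 ∨ f v = 0) ∧ (irdfWeight f : ℕ∞) = w}

/-- The true twin operation: disjoint union of `G₁` and `G₂` together with all
edges between the twin set `T₁ ⊆ V(G₁)` and the twin set `T₂ ⊆ V(G₂)`. -/
def trueTwinGraph {V₁ V₂ : Type*} (G₁ : SimpleGraph V₁) (G₂ : SimpleGraph V₂)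
    (T₁ : Set V₁) (T₂ : Set V₂) : SimpleGraph (V₁ ⊕ V₂) where
  Adj a b :=
    match a, b with
    | .inl u, .inl v => G₁.Adj u v
    | .inr u, .inr v => G₂.Adj u v
    | .inl u, .inr v => u ∈ T₁ ∧ v ∈ T₂
    | .inr v, .inl u => u ∈ T₁ ∧ v ∈ T₂
  symm := ⟨by
    rintro (u | u) (v | v) h
    · exact G₁.adj_symm h
    · exact h
    · exact h
    · exact G₂.adj_symm h⟩
  loopless := ⟨by
    rintro (u | u) h
    · exact G₁.ne_of_adj h rfl
    · exact G₂.ne_of_adj h rfl⟩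

lemma irdfWeight_sum_aux {V₁ V₂ : Type*} [Fintype V₁] [Fintype V₂] (f : V₁ ⊕ V₂ → ℕ) :
    irdfWeight f = irdfWeight (f ∘ Sum.inl) + irdfWeight (f ∘ Sum.inr) :=
  Fintype.sum_sum_type f

lemma nonempty_of_sInf_ne_top {S : Set ℕ∞} (h : sInf S ≠ ⊤) : S.Nonempty := by
  rcases S.eq_empty_or_nonempty with he | hn
  · simp [he] at h
  · exact hn

/-- for the true twin operation, with twin set
`TS(G) = TS(G₁) ∪ TS(G₂)`, one has
`u²(G) = min{u²(G₁) + u⁰⁰(G₂), u⁰⁰(G₁) + u²(G₂)}`. -/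
theorem uTwo_trueTwin {V₁ V₂ : Type*} [Fintype V₁] [Fintype V₂]
    (G₁ : SimpleGraph V₁) (G₂ : SimpleGraph V₂)
    (T₁ : Set V₁) (T₂ : Set V₂) (hT₁ : T₁.Nonempty) (hT₂ : T₂.Nonempty) :
    uTwo (trueTwinGraph G₁ G₂ T₁ T₂) (Sum.inl '' T₁ ∪ Sum.inr '' T₂) =
      min (uTwo G₁ T₁ + uZeroZero G₂ T₂) (uZeroZero G₁ T₁ + uTwo G₂ T₂) := by
  classical
  set G := trueTwinGraph G₁ G₂ T₁ T₂ with hG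
  apply le_antisymm
  · refine le_min ?_ ?_
    · rcases eq_or_ne (uTwo G₁ T₁) ⊤ with h1 | h1
      · simp [h1]
      rcases eq_or_ne (uZeroZero G₂ T₂) ⊤ with h2 | h2
      · simp [h2]
      have hm1 := csInf_mem (nonempty_of_sInf_ne_top h1)
      have hm2 := csInf_mem (nonempty_of_sInf_ne_top h2)
      obtain ⟨f₁, hf₁, ⟨u, huT, hu2⟩, hw₁⟩ := hm1
      obtain ⟨f₂, h₂a, h₂b, h₂c, h₂d, hw₂⟩ := hm2
      refine le_trans (sInf_le ?_) (by unfold uTwo uZeroZero; rw [← hw₁, ← hw₂])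
      refine ⟨Sum.elim f₁ f₂, ⟨?_, ?_, ?_⟩, ⟨Sum.inl u, Or.inl ⟨u, huT, rfl⟩, hu2⟩, ?_⟩
      · rintro (v | v)
        · exact hf₁.1 v
        · exact h₂a v
      · rintro (v | v) hv
        · obtain ⟨w, hadj, hw⟩ := hf₁.2.1 v hv
          exact ⟨Sum.inl w, hadj, hw⟩
        · by_cases hvT : v ∈ T₂
          · exact ⟨Sum.inl u, ⟨huT, hvT⟩, hu2⟩
          · obtain ⟨w, hwT, hadj, hw⟩ := h₂c v hvT hv
            exact ⟨Sum.inr w, hadj, hw⟩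
      · rintro (a | a) (b | b) hab
        · exact hf₁.2.2 a b hab
        · exact Or.inr (h₂b b hab.2)
        · exact Or.inl (h₂b a hab.2)
        · exact h₂d a b hab
      · rw [irdfWeight_sum_aux]
        push_cast
        rfl
    · rcases eq_or_ne (uZeroZero G₁ T₁) ⊤ with h1 | h1
      · simp [h1]
      rcases eq_or_ne (uTwo G₂ T₂) ⊤ with h2 | h2
      · simp [h2]
      have hm1 := csInf_mem (nonempty_of_sInf_ne_top h1)
      have hm2 := csInf_mem (nonempty_of_sInf_ne_top h2)
      obtain ⟨f₁, h₁a, h₁b, h₁c, h₁d, hw₁⟩ := hm1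
      obtain ⟨f₂, hf₂, ⟨u, huT, hu2⟩, hw₂⟩ := hm2
      refine le_trans (sInf_le ?_) (by unfold uTwo uZeroZero; rw [← hw₁, ← hw₂])
      refine ⟨Sum.elim f₁ f₂, ⟨?_, ?_, ?_⟩, ⟨Sum.inr u, Or.inr ⟨u, huT, rfl⟩, hu2⟩, ?_⟩
      · rintro (v | v)
        · exact h₁a v
        · exact hf₂.1 v
      · rintro (v | v) hv
        · by_cases hvT : v ∈ T₁
          · exact ⟨Sum.inr u, ⟨hvT, huT⟩, hu2⟩
          · obtain ⟨w, hwT, hadj, hw⟩ := h₁c v hvT hv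
            exact ⟨Sum.inl w, hadj, hw⟩
        · obtain ⟨w, hadj, hw⟩ := hf₂.2.1 v hv
          exact ⟨Sum.inr w, hadj, hw⟩
      · rintro (a | a) (b | b) hab
        · exact h₁d a b hab
        · exact Or.inl (h₁b a hab.1)
        · exact Or.inr (h₁b b hab.1)
        · exact hf₂.2.2 a b hab
      · rw [irdfWeight_sum_aux]
        push_cast
        rfl
  · refine le_sInf ?_
    rintro w ⟨f, ⟨hb, hz, hind⟩, ⟨t, htT, ht2⟩, rfl⟩
    have hsplit : (irdfWeight f : ℕ∞) =
        (irdfWeight (f ∘ Sum.inl) : ℕ∞) + (irdfWeight (f ∘ Sum.inr) : ℕ∞) := by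
      rw [irdfWeight_sum_aux]; push_cast; rfl
    rcases htT with ⟨u, huT, rfl⟩ | ⟨u, huT, rfl⟩
    · -- 2 on the left twin set
      have hz2 : ∀ v ∈ T₂, f (Sum.inr v) = 0 := by
        intro v hv
        rcases hind (Sum.inl u) (Sum.inr v) ⟨huT, hv⟩ with h | h
        · rw [ht2] at h; exact absurd h (by norm_num)
        · exact h
      have hA : uTwo G₁ T₁ ≤ (irdfWeight (f ∘ Sum.inl) : ℕ∞) := by
        refine sInf_le ⟨f ∘ Sum.inl, ⟨fun v => hb _, ?_, fun a b hab => hind _ _ hab⟩,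
          ⟨u, huT, ht2⟩, rfl⟩
        intro v hv
        obtain ⟨w, hadj, hw⟩ := hz (Sum.inl v) hv
        rcases w with w | w
        · exact ⟨w, hadj, hw⟩
        · exact absurd hw (by rw [hz2 w hadj.2]; norm_num)
      have hB : uZeroZero G₂ T₂ ≤ (irdfWeight (f ∘ Sum.inr) : ℕ∞) := by
        refine sInf_le ⟨f ∘ Sum.inr, fun v => hb _, hz2, ?_,
          fun a b hab => hind _ _ hab, rfl⟩
        intro v hvT hv
        obtain ⟨w, hadj, hw⟩ := hz (Sum.inr v) hv
        rcases w with w | w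
        · exact absurd hadj.2 hvT
        · refine ⟨w, ?_, hadj, hw⟩
          intro hwT
          rw [hz2 w hwT] at hw
          exact absurd hw (by norm_num)
      calc min (uTwo G₁ T₁ + uZeroZero G₂ T₂) (uZeroZero G₁ T₁ + uTwo G₂ T₂)
          ≤ uTwo G₁ T₁ + uZeroZero G₂ T₂ := min_le_left _ _
        _ ≤ _ := by rw [hsplit]; exact add_le_add hA hB
    · -- 2 on the right twin set
      have hz1 : ∀ v ∈ T₁, f (Sum.inl v) = 0 := by
        intro v hv
        rcases hind (Sum.inl v) (Sum.inr u) ⟨hv, huT⟩ with h | h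
        · exact h
        · rw [ht2] at h; exact absurd h (by norm_num)
      have hA : uZeroZero G₁ T₁ ≤ (irdfWeight (f ∘ Sum.inl) : ℕ∞) := by
        refine sInf_le ⟨f ∘ Sum.inl, fun v => hb _, hz1, ?_,
          fun a b hab => hind _ _ hab, rfl⟩
        intro v hvT hv
        obtain ⟨w, hadj, hw⟩ := hz (Sum.inl v) hv
        rcases w with w | w
        · refine ⟨w, ?_, hadj, hw⟩
          intro hwT
          rw [hz1 w hwT] at hw
          exact absurd hw (by norm_num)
        · exact absurd hadj.1 hvT
      have hB : uTwo G₂ T₂ ≤ (irdfWeight (f ∘ Sum.inr) : ℕ∞) := by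
        refine sInf_le ⟨f ∘ Sum.inr, ⟨fun v => hb _, ?_, fun a b hab => hind _ _ hab⟩,
          ⟨u, huT, ht2⟩, rfl⟩
        intro v hv
        obtain ⟨w, hadj, hw⟩ := hz (Sum.inr v) hv
        rcases w with w | w
        · exact absurd hw (by rw [hz1 w hadj.1]; norm_num)
        · exact ⟨w, hadj, hw⟩
      calc min (uTwo G₁ T₁ + uZeroZero G₂ T₂) (uZeroZero G₁ T₁ + uTwo G₂ T₂)
          ≤ uZeroZero G₁ T₁ + uTwo G₂ T₂ := min_le_right _ _
        _ ≤ _ := by rw [hsplit]; exact add_le_add hA hB
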